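/- arXiv:0709.2507 — 2 statements merged into one kernel-verified Lean document; each statement's English description precedes it below -/
import Mathlib

section
/- Suppose ψ_+, ψ_- : ℤ → ℂ solve the same Jacobi equation H u = λ u with real a, b, λ, and the Wronskians satisfy W(conj(ψ_±), ψ_±) = ± 1/ρ_± with Im ρ_+ > 0 and Im ρ_- > 0. Then W(ψ_-, ψ_+) ≠ 0; i.e., ψ_+ and ψ_- are linearly independent. -/
def jacobiWronskian (a : ℤ → ℝ) (f g : ℤ → ℂ) (n : ℤ) : ℂ :=
  (a n : ℂ) * (f n * g (n + 1) - f (n + 1) * g n)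

def IsJacobiSolution (a b : ℤ → ℝ) (z : ℂ) (u : ℤ → ℂ) : Prop :=
  ∀ n : ℤ, (a (n - 1) : ℂ) * u (n - 1) + (b n : ℂ) * u n + (a n : ℂ) * u (n + 1) = z * u n

/-- If `W(conj ψ₊, ψ₊) = 1/ρ₊` and `W(conj ψ₋, ψ₋) = −1/ρ₋` with
`Im ρ₊ > 0`, `Im ρ₋ > 0`, then `W(ψ₋, ψ₊) ≠ 0`, i.e. `ψ₊, ψ₋` are linearly
independent. -/
theorem jost_solutions_independent (a b : ℤ → ℝ) (ha : ∀ n, a n ≠ 0) (lam : ℝ)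
    (ψp ψm : ℤ → ℂ)
    (hψp : IsJacobiSolution a b (lam : ℂ) ψp) (hψm : IsJacobiSolution a b (lam : ℂ) ψm)
    (ρp ρm : ℂ) (hρp : 0 < ρp.im) (hρm : 0 < ρm.im)
    (hWp : ∀ n : ℤ, jacobiWronskian a (fun k => (starRingEnd ℂ) (ψp k)) ψp n = 1 / ρp)
    (hWm : ∀ n : ℤ, jacobiWronskian a (fun k => (starRingEnd ℂ) (ψm k)) ψm n = -(1 / ρm)) :
    ∀ n : ℤ, jacobiWronskian a ψm ψp n ≠ 0 := by
  intro n h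
  have hp := hWp n
  have hm := hWm n
  simp only [jacobiWronskian] at h hp hm
  have hρp0 : ρp ≠ 0 := fun h0 => by simp [h0] at hρp
  have hρm0 : ρm ≠ 0 := fun h0 => by simp [h0] at hρm
  have han : (a n : ℂ) ≠ 0 := Complex.ofReal_ne_zero.mpr (ha n)
  have key : ψm n * ψp (n + 1) = ψm (n + 1) * ψp n := by
    rcases mul_eq_zero.mp h with h1 | h2
    · exact absurd h1 han
    · linear_combination h2
  have hψpn : ψp n ≠ 0 := by
    intro h0
    rw [h0] at hp
    simp only [map_zero, mul_zero, sub_zero, zero_mul, mul_zero, zero_sub, neg_zero] at hp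
    exact one_div_ne_zero hρp0 hp.symm
  obtain ⟨c, hmn, hmn1⟩ : ∃ c : ℂ, ψm n = c * ψp n ∧ ψm (n + 1) = c * ψp (n + 1) := by
    refine ⟨ψm n / ψp n, (div_mul_cancel₀ _ hψpn).symm, ?_⟩
    field_simp
    linear_combination -key
  rw [hmn, hmn1] at hm
  simp only [map_mul] at hm
  have heq : (starRingEnd ℂ) c * c * (1 / ρp) = -(1 / ρm) := by
    rw [← hm]
    linear_combination (-((starRingEnd ℂ) c * c)) * hp
  have hcn : (starRingEnd ℂ) c * c = (Complex.normSq c : ℂ) := by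
    rw [mul_comm, Complex.mul_conj]
  rw [hcn] at heq
  have him := congrArg Complex.im heq
  simp only [one_div, Complex.mul_im, Complex.ofReal_re, Complex.ofReal_im, Complex.inv_im,
    Complex.inv_re, Complex.neg_im, zero_mul, add_zero] at him
  have h1 : 0 < Complex.normSq ρp := Complex.normSq_pos.mpr hρp0
  have h2 : 0 < Complex.normSq ρm := Complex.normSq_pos.mpr hρm0
  have h3 : 0 ≤ Complex.normSq c := Complex.normSq_nonneg c
  have h4 : 0 < ρm.im / Complex.normSq ρm := by positivity
  rw [neg_div, neg_div, neg_neg] at him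
  nlinarith [mul_nonneg h3 (div_pos hρp h1).le, him]
end

section
/- Let F : ℤ² → ℝ be symmetric with |F(n,m)| ≤ C ∑_{j=n+m}^{∞} q(j) for a fixed constant C > 0 and q : ℤ → [0,∞) with ∑_{j} (1+|j|) q(j) < ∞. Then for each fixed n, the operator (𝓕 f)(m) = ∑_{l=n}^{∞} F(l,m) f(l) is a compact (indeed summable-kernel, hence bounded with finite-rank approximation) operator on ℓ¹({n, n+1, ...}). -/
/-!
For `l, m ≥ n` the kernel is dominated by a function of the column alone,
`|F(l,m)| ≤ |C| t(n+m)` with `t(s) = ∑_{j ≥ s} q(j)`, and `∑_{m ≥ n} t(n+m)` is finite because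
each `q(j)` is counted at most `j - 2n + 1 ≤ (1 + 2|n|)(1 + |j|)` times. An operator into `ℓ¹`
whose `m`-th coordinate is bounded by `b m * ‖f‖` with `b` summable is the operator-norm limit
of its truncations to finitely many coordinates; these have finite rank, so it is compact.
-/

open Filter Topology

theorem summable_tsum_nat_add_of_summable_mul {p : ℕ → ℝ} (hp : ∀ i, 0 ≤ p i)
    (h : Summable fun i : ℕ => ((i : ℝ) + 1) * p i) : Summable fun k => ∑' i, p (k + i) := by
  -- regrouped along antidiagonals, `(k, i) ↦ p (k + i)` takes the value `p n` exactly `n + 1` times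
  have hprod : Summable fun x : ℕ × ℕ => p (x.1 + x.2) := by
    rw [← Finset.HasAntidiagonal.sigmaAntidiagonalEquivProd.summable_iff]
    have hfiber : ((fun x : ℕ × ℕ => p (x.1 + x.2)) ∘
        Finset.HasAntidiagonal.sigmaAntidiagonalEquivProd) = fun x => p x.1 := by
      ext ⟨n, kl, hkl⟩
      simp [Finset.HasAntidiagonal.sigmaAntidiagonalEquivProd,
        Finset.HasAntidiagonal.mem_antidiagonal.mp hkl]
    rw [hfiber, summable_sigma_of_nonneg fun _ => hp _]
    refine ⟨fun _ => (hasSum_fintype _).summable, h.congr fun i => ?_⟩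
    simp [Finset.Nat.card_antidiagonal]
  exact ((summable_prod_of_nonneg fun _ => hp _).mp hprod).2

section IntTail

variable {q : ℤ → ℝ}

def natEquivIntGe (a : ℤ) : ℕ ≃ {j : ℤ // a ≤ j} where
  toFun k := ⟨a + k, by omega⟩
  invFun j := (j.1 - a).toNat
  left_inv k := by simp
  right_inv j := by ext; have := j.2; simp only; omega

theorem tsum_int_ge_eq_tsum_nat (f : ℤ → ℝ) (a : ℤ) :
    ∑' j : {j : ℤ // a ≤ j}, f j = ∑' i : ℕ, f (a + i) :=
  ((natEquivIntGe a).tsum_eq (fun j => f j)).symm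

theorem summable_int_ge_iff (f : ℤ → ℝ) (a : ℤ) :
    (Summable fun j : {j : ℤ // a ≤ j} => f j) ↔ Summable fun i : ℕ => f (a + i) :=
  ((natEquivIntGe a).summable_iff (f := fun j : {j : ℤ // a ≤ j} => f j)).symm

theorem Summable.int_ge_of_le {s t : ℤ} (h : Summable fun j : {j : ℤ // s ≤ j} => q j)
    (hst : s ≤ t) : Summable fun j : {j : ℤ // t ≤ j} => q j :=
  h.comp_injective (Subtype.impEmbedding _ _ fun _ => hst.trans).injective

theorem tsum_int_ge_anti (hq : ∀ j, 0 ≤ q j) {s t : ℤ}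
    (h : Summable fun j : {j : ℤ // s ≤ j} => q j) (hst : s ≤ t) :
    ∑' j : {j : ℤ // t ≤ j}, q j ≤ ∑' j : {j : ℤ // s ≤ j}, q j :=
  Summable.tsum_le_tsum_of_inj _ (Subtype.impEmbedding _ _ fun _ => hst.trans).injective
    (fun j _ => hq j) (fun _ => le_rfl) (h.int_ge_of_le hst) h

theorem summable_tsum_int_tail (hq : ∀ j, 0 ≤ q j) {a c : ℤ}
    (h : Summable fun j : {j : ℤ // c + a ≤ j} => (1 + |(j : ℝ)|) * q j) :
    Summable fun m : {m : ℤ // a ≤ m} => ∑' j : {j : ℤ // c + m ≤ j}, q j := by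
  rw [summable_int_ge_iff (fun m => ∑' j : {j : ℤ // c + m ≤ j}, q j)]
  rw [summable_int_ge_iff (fun j => (1 + |(j : ℝ)|) * q j)] at h
  have htail : ∀ k : ℕ,
      ∑' j : {j : ℤ // c + (a + k) ≤ j}, q j = ∑' i : ℕ, q (c + a + ↑(k + i)) := by
    intro k
    rw [tsum_int_ge_eq_tsum_nat]
    congr 1; ext i; congr 1; push_cast; ring
  simp_rw [htail]
  refine summable_tsum_nat_add_of_summable_mul (p := fun i => q (c + a + i)) (fun _ => hq _) ?_
  refine (h.mul_left (1 + |((c + a : ℤ) : ℝ)|)).of_nonneg_of_le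
    (fun i => mul_nonneg (by positivity) (hq _)) fun i => ?_
  rw [← mul_assoc]
  refine mul_le_mul_of_nonneg_right ?_ (hq _)
  push_cast
  nlinarith [le_abs_self ((c : ℝ) + a + i), neg_abs_le ((c : ℝ) + a),
    abs_nonneg ((c : ℝ) + a), abs_nonneg ((c : ℝ) + a + i)]

end IntTail

section LpOne

variable {ι : Type*} {E : ι → Type*} [∀ i, NormedAddCommGroup (E i)]

theorem lp.hasSum_norm_one (f : lp E 1) : HasSum (fun i => ‖f i‖) ‖f‖ := by
  simpa using lp.hasSum_norm (p := 1) (by norm_num) f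

theorem memℓp_one_of_norm_le {f : ∀ i, E i} {c : ι → ℝ} (hc : Summable c)
    (h : ∀ i, ‖f i‖ ≤ c i) : Memℓp f 1 :=
  memℓp_gen <| by
    simpa using hc.of_nonneg_of_le (fun i => norm_nonneg _) h

theorem lp.norm_le_tsum_of_norm_apply_le {f : lp E 1} {c : ι → ℝ} (hc : Summable c)
    (h : ∀ i, ‖f i‖ ≤ c i) : ‖f‖ ≤ ∑' i, c i :=
  (lp.hasSum_norm_one f).tsum_eq ▸ (lp.hasSum_norm_one f).summable.tsum_le_tsum h hc

end LpOne

section FiniteRankApproximation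

variable {𝕜 : Type*} [NontriviallyNormedField 𝕜] {X : Type*} [NormedAddCommGroup X]
  [NormedSpace 𝕜 X] {ι : Type*} {E : ι → Type*} [∀ i, NormedAddCommGroup (E i)]
  [∀ i, NormedSpace 𝕜 (E i)] [∀ i, CompleteSpace (E i)] [∀ i, LocallyCompactSpace (E i)]

theorem isCompactOperator_of_norm_apply_le (T : X →L[𝕜] lp E 1) {b : ι → ℝ} (hb : Summable b)
    (hT : ∀ x i, ‖T x i‖ ≤ b i * ‖x‖) : IsCompactOperator T := by
  classical
  set P : Finset ι → X →L[𝕜] lp E 1 := fun s =>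
    ∑ i ∈ s, (lp.singleContinuousLinearMap 𝕜 E 1 i).comp ((lp.evalCLM 𝕜 E 1 i).comp T)
  have hP : ∀ s, IsCompactOperator (P s) := fun s =>
    Submodule.sum_mem (compactOperator _ _ _) fun i _ =>
      (isCompactOperator_of_locallyCompactSpace_dom ((lp.evalCLM 𝕜 E 1 i).comp T)).clm_comp
        (lp.singleContinuousLinearMap 𝕜 E 1 i)
  have hP_apply : ∀ s x j, P s x j = if j ∈ s then T x j else 0 := by
    intro s x j
    simp only [P, sum_apply, lp.coeFn_sum, Finset.sum_apply]
    simp [lp.evalCLM]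
  have hdist : ∀ s, ‖T - P s‖ ≤ ∑' i : {i // i ∉ s}, |b i| := by
    intro s
    refine ContinuousLinearMap.opNorm_le_bound _ (tsum_nonneg fun _ => abs_nonneg _) fun x => ?_
    have hcoord : ∀ j, ‖(T - P s) x j‖ ≤ (s : Set ι)ᶜ.indicator (fun i => |b i|) j * ‖x‖ := by
      intro j
      by_cases hj : j ∈ s
      · simp [hP_apply, hj]
      · simpa [hP_apply, hj] using
          (hT x j).trans (mul_le_mul_of_nonneg_right (le_abs_self _) (norm_nonneg x))
    calc ‖(T - P s) x‖ ≤ ∑' j, (s : Set ι)ᶜ.indicator (fun i => |b i|) j * ‖x‖ :=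
          lp.norm_le_tsum_of_norm_apply_le ((hb.abs.indicator _).mul_right _) hcoord
      _ = (∑' i : {i // i ∉ s}, |b i|) * ‖x‖ := by
          rw [tsum_mul_right, ← tsum_subtype]; rfl
  refine isCompactOperator_of_tendsto (l := atTop) ?_ (Eventually.of_forall hP)
  rw [tendsto_iff_norm_sub_tendsto_zero]
  refine squeeze_zero (fun _ => norm_nonneg _) (fun s => norm_sub_rev (P s) T ▸ hdist s)
    (tendsto_tsum_compl_atTop_zero fun i => |b i|)

end FiniteRankApproximation

section KernelOperator

variable {𝕜 : Type*} [NontriviallyNormedField 𝕜] {ι : Type*} {K : ι → ι → 𝕜} {b : ι → ℝ}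

theorem summable_norm_kernel_mul (hK : ∀ l m, ‖K l m‖ ≤ b m) (f : lp (fun _ : ι => 𝕜) 1)
    (m : ι) : Summable fun l => ‖K l m * f l‖ :=
  ((lp.hasSum_norm_one f).summable.mul_left (b m)).of_nonneg_of_le (fun _ => norm_nonneg _)
    fun l => (norm_mul _ _).trans_le (mul_le_mul_of_nonneg_right (hK l m) (norm_nonneg _))

theorem norm_tsum_kernel_mul_le (hK : ∀ l m, ‖K l m‖ ≤ b m) (f : lp (fun _ : ι => 𝕜) 1)
    (m : ι) : ‖∑' l, K l m * f l‖ ≤ b m * ‖f‖ :=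
  calc ‖∑' l, K l m * f l‖ ≤ ∑' l, ‖K l m * f l‖ :=
        norm_tsum_le_tsum_norm (summable_norm_kernel_mul hK f m)
    _ ≤ ∑' l, b m * ‖f l‖ :=
        (summable_norm_kernel_mul hK f m).tsum_le_tsum
          (fun l => (norm_mul _ _).trans_le (mul_le_mul_of_nonneg_right (hK l m) (norm_nonneg _)))
          ((lp.hasSum_norm_one f).summable.mul_left _)
    _ = b m * ‖f‖ := by rw [tsum_mul_left, (lp.hasSum_norm_one f).tsum_eq]

variable [CompleteSpace 𝕜]

noncomputable def kernelOperator (K : ι → ι → 𝕜) (hb : Summable b) (hK : ∀ l m, ‖K l m‖ ≤ b m) :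
    lp (fun _ : ι => 𝕜) 1 →L[𝕜] lp (fun _ : ι => 𝕜) 1 :=
  LinearMap.mkContinuous
    { toFun f := ⟨fun m => ∑' l, K l m * f l,
        memℓp_one_of_norm_le (hb.mul_right ‖f‖) (norm_tsum_kernel_mul_le hK f)⟩
      map_add' f g := lp.ext <| funext fun m => by
        simp only [lp.coeFn_add, Pi.add_apply, mul_add]
        exact ((summable_norm_kernel_mul hK f m).of_norm).tsum_add
          (summable_norm_kernel_mul hK g m).of_norm
      map_smul' c f := lp.ext <| funext fun m => by
        simp only [lp.coeFn_smul, Pi.smul_apply, smul_eq_mul, RingHom.id_apply, mul_left_comm _ c]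
        exact tsum_mul_left }
    (∑' m, b m) fun f =>
      (lp.norm_le_tsum_of_norm_apply_le (hb.mul_right ‖f‖) (norm_tsum_kernel_mul_le hK f)).trans_eq
        tsum_mul_right

@[simp]
theorem kernelOperator_apply (K : ι → ι → 𝕜) (hb : Summable b) (hK : ∀ l m, ‖K l m‖ ≤ b m)
    (f : lp (fun _ : ι => 𝕜) 1) (m : ι) : kernelOperator K hb hK f m = ∑' l, K l m * f l :=
  rfl

theorem isCompactOperator_kernelOperator [LocallyCompactSpace 𝕜] (K : ι → ι → 𝕜) (hb : Summable b)
    (hK : ∀ l m, ‖K l m‖ ≤ b m) : IsCompactOperator (kernelOperator K hb hK) :=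
  isCompactOperator_of_norm_apply_le _ hb (norm_tsum_kernel_mul_le hK)

end KernelOperator

theorem glm_kernel_compact_general (n : ℤ) (F : ℤ → ℤ → ℝ)
    (C : ℝ) (q : ℤ → ℝ) (hq0 : ∀ j, 0 ≤ q j)
    (hqsum : Summable (fun j : {j : ℤ // 2 * n ≤ j} => (1 + |(j.1 : ℝ)|) * q j.1))
    (hF : ∀ l m : ℤ, n ≤ l → n ≤ m →
      |F l m| ≤ C * ∑' j : {j : ℤ // l + m ≤ j}, q j.1) :
    ∃ T : lp (fun _ : {m : ℤ // n ≤ m} => ℝ) 1 →L[ℝ] lp (fun _ : {m : ℤ // n ≤ m} => ℝ) 1,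
      IsCompactOperator T ∧
      ∀ (f : lp (fun _ : {m : ℤ // n ≤ m} => ℝ) 1) (m : {m : ℤ // n ≤ m}),
        (T f : ∀ _ : {m : ℤ // n ≤ m}, ℝ) m = ∑' l : {l : ℤ // n ≤ l}, F l.1 m.1 * f l := by
  rw [two_mul] at hqsum
  have hq : Summable fun j : {j : ℤ // n + n ≤ j} => q j :=
    hqsum.of_nonneg_of_le (fun _ => hq0 _) fun j =>
      le_mul_of_one_le_left (hq0 _) (le_add_of_nonneg_right (abs_nonneg _))
  have hb : Summable fun m : {m : ℤ // n ≤ m} => |C| * ∑' j : {j : ℤ // n + m ≤ j}, q j :=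
    (summable_tsum_int_tail hq0 hqsum).mul_left _
  have hK : ∀ l m : {m : ℤ // n ≤ m}, ‖F l m‖ ≤ |C| * ∑' j : {j : ℤ // n + m ≤ j}, q j := by
    intro l m
    calc ‖F l m‖ ≤ C * ∑' j : {j : ℤ // l + m ≤ j}, q j :=
          (Real.norm_eq_abs _).trans_le (hF l m l.2 m.2)
      _ ≤ |C| * ∑' j : {j : ℤ // l + m ≤ j}, q j :=
        mul_le_mul_of_nonneg_right (le_abs_self C) (tsum_nonneg fun _ => hq0 _)
      _ ≤ |C| * ∑' j : {j : ℤ // n + m ≤ j}, q j :=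
        mul_le_mul_of_nonneg_left
          (tsum_int_ge_anti hq0 (hq.int_ge_of_le (by omega)) (by omega)) (abs_nonneg C)
  exact ⟨kernelOperator (fun l m => F l m) hb hK, isCompactOperator_kernelOperator _ hb hK,
    fun _ _ => rfl⟩

/-- a symmetric kernel `F` with the decay bound
`|F(l,m)| ≤ C ∑_{j ≥ l+m} q(j)`, where `∑_{j ≥ 2n} (1+|j|) q(j) < ∞`, induces a
compact operator `(𝓕 f)(m) = ∑_{l ≥ n} F(l,m) f(l)` on `ℓ¹({n, n+1, …})`. -/
theorem glm_kernel_compact (n : ℤ) (F : ℤ → ℤ → ℝ)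
    (hsym : ∀ l m : ℤ, F l m = F m l)
    (C : ℝ) (hC : 0 < C) (q : ℤ → ℝ) (hq0 : ∀ j, 0 ≤ q j)
    (hqsum : Summable (fun j : {j : ℤ // 2 * n ≤ j} => (1 + |(j.1 : ℝ)|) * q j.1))
    (hF : ∀ l m : ℤ, n ≤ l → n ≤ m →
      |F l m| ≤ C * ∑' j : {j : ℤ // l + m ≤ j}, q j.1) :
    ∃ T : lp (fun _ : {m : ℤ // n ≤ m} => ℝ) 1 →L[ℝ] lp (fun _ : {m : ℤ // n ≤ m} => ℝ) 1,
      IsCompactOperator T ∧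
      ∀ (f : lp (fun _ : {m : ℤ // n ≤ m} => ℝ) 1) (m : {m : ℤ // n ≤ m}),
        (T f : ∀ _ : {m : ℤ // n ≤ m}, ℝ) m = ∑' l : {l : ℤ // n ≤ l}, F l.1 m.1 * f l :=
  glm_kernel_compact_general n F C q hq0 hqsum hF
end
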